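/- arXiv:2605.16421 — 2 statements merged into one kernel-verified Lean document; each statement's English description precedes it below -/
import Mathlib

section
/- Completeness of orthologic with non-logical axioms: let A be a set of sequents. If every valuation v into every ortholattice that satisfies all sequents of A also satisfies v(φ) ≤ v(ψ), then the sequent (φ^L, ψ^R) is provable in the orthologic proof system augmented with each sequent of A as an axiom rule. -/
/-- Propositional formulas over a set `X` of variables. -/
inductive Formula (X : Type) : Type
  | var : X → Formula X
  | bot : Formula X
  | top : Formula X
  | and : Formula X → Formula X → Formula X
  | or : Formula X → Formula X → Formula X
  | not : Formula X → Formula X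

/-- An ortholattice: a bounded lattice with a complement operation. -/
class Ortholattice (L : Type) extends Lattice L, BoundedOrder L where
  compl : L → L
  compl_compl : ∀ x : L, compl (compl x) = x
  compl_sup : ∀ x y : L, compl (x ⊔ y) = compl x ⊓ compl y
  compl_inf : ∀ x y : L, compl (x ⊓ y) = compl x ⊔ compl y
  inf_compl : ∀ x : L, x ⊓ compl x = ⊥
  sup_compl : ∀ x : L, x ⊔ compl x = ⊤

/-- Homomorphic extension of a valuation `v : X → L` to formulas. -/
def Formula.eval {X L : Type} [Ortholattice L] (v : X → L) : Formula X → L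
  | .var x => v x
  | .bot => ⊥
  | .top => ⊤
  | .and φ ψ => φ.eval v ⊓ ψ.eval v
  | .or φ ψ => φ.eval v ⊔ ψ.eval v
  | .not φ => Ortholattice.compl (φ.eval v)

/-- Annotated formulas: a formula marked as left (`L`) or right (`R`). -/
inductive Ann (X : Type) : Type
  | L : Formula X → Ann X
  | R : Formula X → Ann X

/-- The underlying formula of an annotated formula. -/
def Ann.fml {X : Type} : Ann X → Formula X
  | .L φ => φ
  | .R φ => φ

/-- An orthologic sequent: an unordered pair of annotated formulas. -/
abbrev Sequent (X : Type) := Sym2 (Ann X)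

/-- The orthologic proof system, with non-logical axioms `A`. -/
inductive OLProof {X : Type} (A : Set (Sequent X)) : Sequent X → Prop
  | ax {t : Sequent X} : t ∈ A → OLProof A t
  | hyp (φ : Formula X) : OLProof A s(Ann.L φ, Ann.R φ)
  | cut (Γ Δ : Ann X) (φ : Formula X) :
      OLProof A s(Γ, Ann.R φ) → OLProof A s(Ann.L φ, Δ) → OLProof A s(Γ, Δ)
  | replace (Γ Δ : Ann X) : OLProof A s(Γ, Γ) → OLProof A s(Γ, Δ)
  | andL₁ (φ ψ : Formula X) (Δ : Ann X) :
      OLProof A s(Ann.L φ, Δ) → OLProof A s(Ann.L (φ.and ψ), Δ)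
  | andL₂ (φ ψ : Formula X) (Δ : Ann X) :
      OLProof A s(Ann.L ψ, Δ) → OLProof A s(Ann.L (φ.and ψ), Δ)
  | andR (Γ : Ann X) (φ ψ : Formula X) :
      OLProof A s(Γ, Ann.R φ) → OLProof A s(Γ, Ann.R ψ) → OLProof A s(Γ, Ann.R (φ.and ψ))
  | orL (φ ψ : Formula X) (Δ : Ann X) :
      OLProof A s(Ann.L φ, Δ) → OLProof A s(Ann.L ψ, Δ) → OLProof A s(Ann.L (φ.or ψ), Δ)
  | orR₁ (Γ : Ann X) (φ ψ : Formula X) :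
      OLProof A s(Γ, Ann.R φ) → OLProof A s(Γ, Ann.R (φ.or ψ))
  | orR₂ (Γ : Ann X) (φ ψ : Formula X) :
      OLProof A s(Γ, Ann.R ψ) → OLProof A s(Γ, Ann.R (φ.or ψ))
  | negL (Γ : Ann X) (φ : Formula X) :
      OLProof A s(Γ, Ann.R φ) → OLProof A s(Γ, Ann.L φ.not)
  | negR (φ : Formula X) (Δ : Ann X) :
      OLProof A s(Ann.L φ, Δ) → OLProof A s(Ann.R φ.not, Δ)
  | botL (Δ : Ann X) : OLProof A s(Ann.L Formula.bot, Δ)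
  | topR (Γ : Ann X) : OLProof A s(Γ, Ann.R Formula.top)

/-- Satisfaction of an (ordered) pair of annotated formulas by a valuation. -/
def AnnSat {X L : Type} [Ortholattice L] (v : X → L) : Ann X → Ann X → Prop
  | .L φ, .R ψ => φ.eval v ≤ ψ.eval v
  | .R φ, .L ψ => ψ.eval v ≤ φ.eval v
  | .L φ, .L ψ => φ.eval v ⊓ ψ.eval v = ⊥
  | .R φ, .R ψ => φ.eval v ⊔ ψ.eval v = ⊤

/-- A valuation satisfies a sequent. -/
def SeqSat {X L : Type} [Ortholattice L] (v : X → L) (t : Sequent X) : Prop :=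
  ∀ a b : Ann X, t = s(a, b) → AnnSat v a b
/-- Boolean (classical) evaluation of a formula. -/
def Formula.evalB {X : Type} (v : X → Bool) : Formula X → Bool
  | .var x => v x
  | .bot => false
  | .top => true
  | .and φ ψ => φ.evalB v && ψ.evalB v
  | .or φ ψ => φ.evalB v || ψ.evalB v
  | .not φ => !(φ.evalB v)

/-- Size of a formula (number of nodes). -/
def Formula.size {X : Type} : Formula X → Nat
  | .var _ => 1
  | .bot => 1
  | .top => 1
  | .and φ ψ => φ.size + ψ.size + 1
  | .or φ ψ => φ.size + ψ.size + 1
  | .not φ => φ.size + 1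

/-- Negation normal form. -/
def Formula.nnf {X : Type} : Formula X → Formula X
  | .var x => .var x
  | .bot => .bot
  | .top => .top
  | .and φ ψ => .and φ.nnf ψ.nnf
  | .or φ ψ => .or φ.nnf ψ.nnf
  | .not (.var x) => .not (.var x)
  | .not .bot => .top
  | .not .top => .bot
  | .not (.and φ ψ) => .or φ.not.nnf ψ.not.nnf
  | .not (.or φ ψ) => .and φ.not.nnf ψ.not.nnf
  | .not (.not φ) => φ.nnf
termination_by φ => φ.size
decreasing_by all_goals (simp [Formula.size] <;> omega)

/-- A formula is in NNF if negation occurs only directly on variables. -/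
def Formula.IsNNF {X : Type} : Formula X → Prop
  | .var _ => True
  | .bot => True
  | .top => True
  | .and φ ψ => φ.IsNNF ∧ ψ.IsNNF
  | .or φ ψ => φ.IsNNF ∧ ψ.IsNNF
  | .not (.var _) => True
  | .not _ => False

/-- `getInverse φ = nnf (¬ φ)`. -/
def getInverse {X : Type} (φ : Formula X) : Formula X := φ.not.nnf

/-- Orthologic equivalence of formulas (without non-logical axioms). -/
def OLEquiv {X : Type} (φ ψ : Formula X) : Prop :=
  OLProof (∅ : Set (Sequent X)) s(Ann.L φ, Ann.R ψ) ∧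
  OLProof (∅ : Set (Sequent X)) s(Ann.L ψ, Ann.R φ)

/-- `Subformula γ φ` means `γ` is a subformula of `φ`. -/
inductive Subformula {X : Type} : Formula X → Formula X → Prop
  | refl (φ : Formula X) : Subformula φ φ
  | and_left {γ φ ψ : Formula X} : Subformula γ φ → Subformula γ (φ.and ψ)
  | and_right {γ φ ψ : Formula X} : Subformula γ ψ → Subformula γ (φ.and ψ)
  | or_left {γ φ ψ : Formula X} : Subformula γ φ → Subformula γ (φ.or ψ)
  | or_right {γ φ ψ : Formula X} : Subformula γ ψ → Subformula γ (φ.or ψ)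
  | not_sub {γ φ : Formula X} : Subformula γ φ → Subformula γ φ.not

/-! Lindenbaum–Tarski: provable entailment modulo `A` is a preorder on formulas whose
quotient is an ortholattice (complementation is an antitone involution, so the de Morgan
laws come for free). The valuation sending each variable to its class evaluates every
formula to its class and satisfies every provable sequent, in particular those of `A`;
in this model `[φ] ≤ [ψ]` is exactly the provability of `(φ^L, ψ^R)`. -/

theorem Antitone.map_sup_of_involutive {α : Type*} [Lattice α] {f : α → α}
    (hf : Antitone f) (hinv : Function.Involutive f) (x y : α) :
    f (x ⊔ y) = f x ⊓ f y := by
  refine le_antisymm (le_inf (hf le_sup_left) (hf le_sup_right)) ?_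
  have hx : x ≤ f (f x ⊓ f y) := (hinv x).ge.trans (hf inf_le_left)
  have hy : y ≤ f (f x ⊓ f y) := (hinv y).ge.trans (hf inf_le_right)
  simpa only [hinv _] using hf (sup_le hx hy)

theorem Antitone.map_inf_of_involutive {α : Type*} [Lattice α] {f : α → α}
    (hf : Antitone f) (hinv : Function.Involutive f) (x y : α) :
    f (x ⊓ y) = f x ⊔ f y := by
  refine le_antisymm ?_ (sup_le (hf inf_le_left) (hf inf_le_right))
  have hx : f (f x ⊔ f y) ≤ x := (hf le_sup_left).trans (hinv x).le
  have hy : f (f x ⊔ f y) ≤ y := (hf le_sup_right).trans (hinv y).le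
  simpa only [hinv _] using hf (le_inf hx hy)

namespace OLProof

variable {X : Type} {A : Set (Sequent X)}

theorem swap {a b : Ann X} (h : OLProof A s(a, b)) : OLProof A s(b, a) :=
  Sym2.eq_swap ▸ h

end OLProof

def Entails {X : Type} (A : Set (Sequent X)) (φ ψ : Formula X) : Prop :=
  OLProof A s(Ann.L φ, Ann.R ψ)

namespace Entails

variable {X : Type} {A : Set (Sequent X)} {φ ψ χ : Formula X}

theorem refl (φ : Formula X) : Entails A φ φ := OLProof.hyp φ

theorem trans (h₁ : Entails A φ ψ) (h₂ : Entails A ψ χ) : Entails A φ χ :=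
  OLProof.cut _ _ ψ h₁ h₂

theorem and_elim_left : Entails A (φ.and ψ) φ := OLProof.andL₁ _ _ _ (OLProof.hyp φ)

theorem and_elim_right : Entails A (φ.and ψ) ψ := OLProof.andL₂ _ _ _ (OLProof.hyp ψ)

theorem and_intro (h₁ : Entails A χ φ) (h₂ : Entails A χ ψ) : Entails A χ (φ.and ψ) :=
  OLProof.andR _ _ _ h₁ h₂

theorem or_intro_left : Entails A φ (φ.or ψ) := OLProof.orR₁ _ _ _ (OLProof.hyp φ)

theorem or_intro_right : Entails A ψ (φ.or ψ) := OLProof.orR₂ _ _ _ (OLProof.hyp ψ)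

theorem or_elim (h₁ : Entails A φ χ) (h₂ : Entails A ψ χ) : Entails A (φ.or ψ) χ :=
  OLProof.orL _ _ _ h₁ h₂

theorem bot_elim : Entails A Formula.bot φ := OLProof.botL _

theorem top_intro : Entails A φ Formula.top := OLProof.topR _

theorem not_not_intro : Entails A φ φ.not.not :=
  (OLProof.negR φ.not _ (OLProof.negL (Ann.L φ) φ (OLProof.hyp φ)).swap).swap

theorem not_not_elim : Entails A φ.not.not φ :=
  (OLProof.negL (Ann.R φ) φ.not (OLProof.negR φ (Ann.R φ) (OLProof.hyp φ)).swap).swap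

theorem not_anti (h : Entails A φ ψ) : Entails A ψ.not φ.not :=
  (OLProof.negR φ _ (OLProof.negL (Ann.L φ) ψ h)).swap

theorem and_of_left_left (h : OLProof A s(Ann.L φ, Ann.L ψ)) :
    Entails A (φ.and ψ) Formula.bot := by
  have hφ : OLProof A s(Ann.L (φ.and ψ), Ann.L φ) := OLProof.andL₂ φ ψ _ h.swap
  exact OLProof.replace _ _ (OLProof.cut _ _ φ and_elim_left hφ.swap)

theorem or_of_right_right (h : OLProof A s(Ann.R φ, Ann.R ψ)) :
    Entails A Formula.top (φ.or ψ) := by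
  have hφ : OLProof A s(Ann.R φ, Ann.R (φ.or ψ)) := OLProof.orR₂ _ φ ψ h
  exact (OLProof.replace _ _ (OLProof.cut _ _ φ hφ.swap or_intro_left)).swap

theorem and_not_self (φ : Formula X) : Entails A (φ.and φ.not) Formula.bot :=
  and_of_left_left (OLProof.negL (Ann.L φ) φ (OLProof.hyp φ))

theorem top_or_not_self (φ : Formula X) : Entails A Formula.top (φ.or φ.not) :=
  or_of_right_right (OLProof.negR φ (Ann.R φ) (OLProof.hyp φ)).swap

end Entails

def lindenbaumSetoid {X : Type} (A : Set (Sequent X)) : Setoid (Formula X) where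
  r φ ψ := Entails A φ ψ ∧ Entails A ψ φ
  iseqv := ⟨fun φ => ⟨.refl φ, .refl φ⟩, fun h => ⟨h.2, h.1⟩,
    fun h₁ h₂ => ⟨h₁.1.trans h₂.1, h₂.2.trans h₁.2⟩⟩

def Lindenbaum {X : Type} (A : Set (Sequent X)) : Type := Quotient (lindenbaumSetoid A)

namespace Lindenbaum

variable {X : Type} {A : Set (Sequent X)}

def mk (A : Set (Sequent X)) (φ : Formula X) : Lindenbaum A := Quotient.mk _ φ

@[elab_as_elim]
theorem ind {p : Lindenbaum A → Prop} (h : ∀ φ, p (mk A φ)) (x : Lindenbaum A) : p x :=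
  Quotient.ind h x

instance : PartialOrder (Lindenbaum A) where
  le := Quotient.lift₂ (Entails A) fun _ _ _ _ h₁ h₂ =>
    propext ⟨fun h => h₁.2.trans (h.trans h₂.1), fun h => h₁.1.trans (h.trans h₂.2)⟩
  le_refl := ind fun φ => Entails.refl φ
  le_trans := ind fun _ => ind fun _ => ind fun _ => Entails.trans
  le_antisymm := ind fun _ => ind fun _ h₁ h₂ => Quotient.sound ⟨h₁, h₂⟩

instance : Lattice (Lindenbaum A) where
  inf := Quotient.map₂ Formula.and fun _ _ h₁ _ _ h₂ =>
    ⟨.and_intro (.trans .and_elim_left h₁.1) (.trans .and_elim_right h₂.1),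
     .and_intro (.trans .and_elim_left h₁.2) (.trans .and_elim_right h₂.2)⟩
  sup := Quotient.map₂ Formula.or fun _ _ h₁ _ _ h₂ =>
    ⟨.or_elim (h₁.1.trans .or_intro_left) (h₂.1.trans .or_intro_right),
     .or_elim (h₁.2.trans .or_intro_left) (h₂.2.trans .or_intro_right)⟩
  inf_le_left := ind fun _ => ind fun _ => Entails.and_elim_left
  inf_le_right := ind fun _ => ind fun _ => Entails.and_elim_right
  le_inf := ind fun _ => ind fun _ => ind fun _ => Entails.and_intro
  le_sup_left := ind fun _ => ind fun _ => Entails.or_intro_left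
  le_sup_right := ind fun _ => ind fun _ => Entails.or_intro_right
  sup_le := ind fun _ => ind fun _ => ind fun _ => Entails.or_elim

instance : BoundedOrder (Lindenbaum A) where
  top := mk A Formula.top
  bot := mk A Formula.bot
  le_top := ind fun _ => Entails.top_intro
  bot_le := ind fun _ => Entails.bot_elim

def compl : Lindenbaum A → Lindenbaum A :=
  Quotient.map Formula.not fun _ _ h => ⟨h.2.not_anti, h.1.not_anti⟩

theorem compl_antitone : Antitone (compl : Lindenbaum A → Lindenbaum A) :=
  ind fun _ => ind fun _ => Entails.not_anti

theorem compl_involutive : Function.Involutive (compl : Lindenbaum A → Lindenbaum A) :=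
  ind fun _ => Quotient.sound ⟨Entails.not_not_elim, Entails.not_not_intro⟩

instance : Ortholattice (Lindenbaum A) where
  compl := compl
  compl_compl := compl_involutive
  compl_sup := compl_antitone.map_sup_of_involutive compl_involutive
  compl_inf := compl_antitone.map_inf_of_involutive compl_involutive
  inf_compl := ind fun φ => Quotient.sound ⟨Entails.and_not_self φ, .bot_elim⟩
  sup_compl := ind fun φ => Quotient.sound ⟨.top_intro, Entails.top_or_not_self φ⟩

def canonicalValuation (A : Set (Sequent X)) : X → Lindenbaum A := fun x => mk A (.var x)

theorem eval_canonicalValuation (χ : Formula X) : χ.eval (canonicalValuation A) = mk A χ := by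
  induction χ with
  | var | bot | top => rfl
  | and φ ψ ihφ ihψ => exact congrArg₂ (· ⊓ ·) ihφ ihψ
  | or φ ψ ihφ ihψ => exact congrArg₂ (· ⊔ ·) ihφ ihψ
  | not φ ih => exact congrArg compl ih

theorem annSat_canonicalValuation {a b : Ann X} (h : OLProof A s(a, b)) :
    AnnSat (canonicalValuation A) a b := by
  cases a <;> cases b <;>
    simp only [AnnSat, eval_canonicalValuation]
  case L.L φ ψ => exact Quotient.sound ⟨Entails.and_of_left_left h, .bot_elim⟩
  case L.R φ ψ => exact h
  case R.L φ ψ => exact h.swap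
  case R.R φ ψ => exact Quotient.sound ⟨.top_intro, Entails.or_of_right_right h⟩

theorem seqSat_canonicalValuation {t : Sequent X} (h : OLProof A t) :
    SeqSat (canonicalValuation A) t := by
  rintro a b rfl
  exact annSat_canonicalValuation h

end Lindenbaum

open Lindenbaum in
theorem ol_completeness_with_axioms_general {X : Type}
    (A : Set (Sequent X)) (φ ψ : Formula X)
    (h : ∀ (L : Type) [Ortholattice L] (v : X → L),
      (∀ u ∈ A, SeqSat v u) → φ.eval v ≤ ψ.eval v) :
    OLProof A s(Ann.L φ, Ann.R ψ) := by
  have hle := h (Lindenbaum A) (canonicalValuation A) fun _ hu =>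
    seqSat_canonicalValuation (.ax hu)
  rwa [eval_canonicalValuation, eval_canonicalValuation] at hle

/-- Completeness of orthologic with non-logical axioms `A`: if
every valuation into every ortholattice satisfying all sequents of `A` also
satisfies `v(φ) ≤ v(ψ)`, then `(φ^L, ψ^R)` is provable from `A`. -/
theorem ol_completeness_with_axioms {X : Type} [Countable X] [Infinite X]
    (A : Set (Sequent X)) (φ ψ : Formula X)
    (h : ∀ (L : Type) [Ortholattice L] (v : X → L),
      (∀ u ∈ A, SeqSat v u) → φ.eval v ≤ ψ.eval v) :
    OLProof A s(Ann.L φ, Ann.R ψ) :=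
  ol_completeness_with_axioms_general A φ ψ h
end

section
/- Subformula property: if a sequent (Γ, Δ) has a proof in the orthologic proof system with non-logical axioms A, then it has a proof in which every formula occurring in any sequent of the proof is a subformula of a formula of Γ, Δ, or of a formula occurring in some sequent of A. -/
/-- The orthologic proof system where every cut formula must satisfy `C`. -/
inductive OLProofCut {X : Type} (A : Set (Sequent X)) (C : Formula X → Prop) :
    Sequent X → Prop
  | ax {t : Sequent X} : t ∈ A → OLProofCut A C t
  | hyp (φ : Formula X) : OLProofCut A C s(Ann.L φ, Ann.R φ)
  | cut (Γ Δ : Ann X) (φ : Formula X) : C φ →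
      OLProofCut A C s(Γ, Ann.R φ) → OLProofCut A C s(Ann.L φ, Δ) → OLProofCut A C s(Γ, Δ)
  | replace (Γ Δ : Ann X) : OLProofCut A C s(Γ, Γ) → OLProofCut A C s(Γ, Δ)
  | andL₁ (φ ψ : Formula X) (Δ : Ann X) :
      OLProofCut A C s(Ann.L φ, Δ) → OLProofCut A C s(Ann.L (φ.and ψ), Δ)
  | andL₂ (φ ψ : Formula X) (Δ : Ann X) :
      OLProofCut A C s(Ann.L ψ, Δ) → OLProofCut A C s(Ann.L (φ.and ψ), Δ)
  | andR (Γ : Ann X) (φ ψ : Formula X) :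
      OLProofCut A C s(Γ, Ann.R φ) → OLProofCut A C s(Γ, Ann.R ψ) →
      OLProofCut A C s(Γ, Ann.R (φ.and ψ))
  | orL (φ ψ : Formula X) (Δ : Ann X) :
      OLProofCut A C s(Ann.L φ, Δ) → OLProofCut A C s(Ann.L ψ, Δ) →
      OLProofCut A C s(Ann.L (φ.or ψ), Δ)
  | orR₁ (Γ : Ann X) (φ ψ : Formula X) :
      OLProofCut A C s(Γ, Ann.R φ) → OLProofCut A C s(Γ, Ann.R (φ.or ψ))
  | orR₂ (Γ : Ann X) (φ ψ : Formula X) :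
      OLProofCut A C s(Γ, Ann.R ψ) → OLProofCut A C s(Γ, Ann.R (φ.or ψ))
  | negL (Γ : Ann X) (φ : Formula X) :
      OLProofCut A C s(Γ, Ann.R φ) → OLProofCut A C s(Γ, Ann.L φ.not)
  | negR (φ : Formula X) (Δ : Ann X) :
      OLProofCut A C s(Ann.L φ, Δ) → OLProofCut A C s(Ann.R φ.not, Δ)
  | botL (Δ : Ann X) : OLProofCut A C s(Ann.L Formula.bot, Δ)
  | topR (Γ : Ann X) : OLProofCut A C s(Γ, Ann.R Formula.top)

/-- The orthologic proof system where every sequent occurring in the proof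
(i.e. the conclusion of every rule instance) must lie in `S`. -/
inductive OLProofIn {X : Type} (A : Set (Sequent X)) (S : Set (Sequent X)) :
    Sequent X → Prop
  | ax {t : Sequent X} : t ∈ A → t ∈ S → OLProofIn A S t
  | hyp (φ : Formula X) : s(Ann.L φ, Ann.R φ) ∈ S → OLProofIn A S s(Ann.L φ, Ann.R φ)
  | cut (Γ Δ : Ann X) (φ : Formula X) : s(Γ, Δ) ∈ S →
      OLProofIn A S s(Γ, Ann.R φ) → OLProofIn A S s(Ann.L φ, Δ) → OLProofIn A S s(Γ, Δ)
  | replace (Γ Δ : Ann X) : s(Γ, Δ) ∈ S → OLProofIn A S s(Γ, Γ) → OLProofIn A S s(Γ, Δ)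
  | andL₁ (φ ψ : Formula X) (Δ : Ann X) : s(Ann.L (φ.and ψ), Δ) ∈ S →
      OLProofIn A S s(Ann.L φ, Δ) → OLProofIn A S s(Ann.L (φ.and ψ), Δ)
  | andL₂ (φ ψ : Formula X) (Δ : Ann X) : s(Ann.L (φ.and ψ), Δ) ∈ S →
      OLProofIn A S s(Ann.L ψ, Δ) → OLProofIn A S s(Ann.L (φ.and ψ), Δ)
  | andR (Γ : Ann X) (φ ψ : Formula X) : s(Γ, Ann.R (φ.and ψ)) ∈ S →
      OLProofIn A S s(Γ, Ann.R φ) → OLProofIn A S s(Γ, Ann.R ψ) →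
      OLProofIn A S s(Γ, Ann.R (φ.and ψ))
  | orL (φ ψ : Formula X) (Δ : Ann X) : s(Ann.L (φ.or ψ), Δ) ∈ S →
      OLProofIn A S s(Ann.L φ, Δ) → OLProofIn A S s(Ann.L ψ, Δ) →
      OLProofIn A S s(Ann.L (φ.or ψ), Δ)
  | orR₁ (Γ : Ann X) (φ ψ : Formula X) : s(Γ, Ann.R (φ.or ψ)) ∈ S →
      OLProofIn A S s(Γ, Ann.R φ) → OLProofIn A S s(Γ, Ann.R (φ.or ψ))
  | orR₂ (Γ : Ann X) (φ ψ : Formula X) : s(Γ, Ann.R (φ.or ψ)) ∈ S →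
      OLProofIn A S s(Γ, Ann.R ψ) → OLProofIn A S s(Γ, Ann.R (φ.or ψ))
  | negL (Γ : Ann X) (φ : Formula X) : s(Γ, Ann.L φ.not) ∈ S →
      OLProofIn A S s(Γ, Ann.R φ) → OLProofIn A S s(Γ, Ann.L φ.not)
  | negR (φ : Formula X) (Δ : Ann X) : s(Ann.R φ.not, Δ) ∈ S →
      OLProofIn A S s(Ann.L φ, Δ) → OLProofIn A S s(Ann.R φ.not, Δ)
  | botL (Δ : Ann X) : s(Ann.L Formula.bot, Δ) ∈ S → OLProofIn A S s(Ann.L Formula.bot, Δ)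
  | topR (Γ : Ann X) : s(Γ, Ann.R Formula.top) ∈ S → OLProofIn A S s(Γ, Ann.R Formula.top)

/-!
Cut elimination relative to the axioms: a cut on a formula that occurs in no axiom can be
removed. Such a cut is pushed up the derivation of its left premise until the cut formula is
introduced there, then up the derivation of its right premise until it is introduced there
too, where it becomes cuts on immediate subformulas. To make this go through, the one-formula
sequent is given an empty second position, so that weakening and contraction become explicit
rules. Once the only cuts are on axiom formulas, every formula in a premise of a rule is a
subformula of a formula of its conclusion or of an axiom, which is the subformula property.
-/

theorem Subformula.trans {X : Type} {φ ψ χ : Formula X} (h₁ : Subformula φ ψ)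
    (h₂ : Subformula ψ χ) : Subformula φ χ := by
  induction h₂ with
  | refl => exact h₁
  | and_left _ ih => exact .and_left ih
  | and_right _ ih => exact .and_right ih
  | or_left _ ih => exact .or_left ih
  | or_right _ ih => exact .or_right ih
  | not_sub _ ih => exact .not_sub ih

theorem OLProofIn.swap {X : Type} {A S : Set (Sequent X)} {a b : Ann X}
    (h : OLProofIn A S s(a, b)) : OLProofIn A S s(b, a) := by
  rwa [Sym2.eq_swap]

section Analytic

variable {X : Type}

def Ann.flip : Ann X → Ann X
  | .L φ => .R φ
  | .R φ => .L φ

/-- `none` marks an empty position: the one-formula sequent `(Γ, Γ)` of the proof system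
becomes `s(some Γ, none)`. -/
abbrev OptSequent (X : Type) := Sym2 (Option (Ann X))

abbrev la (φ : Formula X) : Option (Ann X) := some (Ann.L φ)

abbrev ra (φ : Formula X) : Option (Ann X) := some (Ann.R φ)

def IsAxiomFormula (A : Set (Sequent X)) (φ : Formula X) : Prop :=
  ∃ w ∈ A, ∃ b ∈ w, b.fml = φ

/-- A logical rule, given by the principal position of its conclusion and those of its
premises; the other position is a context shared by all of them. -/
inductive ContextRule : Option (Ann X) → List (Option (Ann X)) → Prop
  | andL₁ (φ ψ : Formula X) : ContextRule (la (φ.and ψ)) [la φ]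
  | andL₂ (φ ψ : Formula X) : ContextRule (la (φ.and ψ)) [la ψ]
  | andR (φ ψ : Formula X) : ContextRule (ra (φ.and ψ)) [ra φ, ra ψ]
  | orL (φ ψ : Formula X) : ContextRule (la (φ.or ψ)) [la φ, la ψ]
  | orR₁ (φ ψ : Formula X) : ContextRule (ra (φ.or ψ)) [ra φ]
  | orR₂ (φ ψ : Formula X) : ContextRule (ra (φ.or ψ)) [ra ψ]
  | negL (φ : Formula X) : ContextRule (la φ.not) [ra φ]
  | negR (φ : Formula X) : ContextRule (ra φ.not) [la φ]
  | botL : ContextRule (la .bot) []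
  | topR : ContextRule (ra .top) []

inductive Analytic (A : Set (Sequent X)) : OptSequent X → Prop
  | ax {w : Sequent X} : w ∈ A → Analytic A (w.map some)
  | hyp (φ : Formula X) : Analytic A s(la φ, ra φ)
  | cut {Γ Δ : Option (Ann X)} {φ : Formula X} : IsAxiomFormula A φ →
      Analytic A s(Γ, ra φ) → Analytic A s(la φ, Δ) → Analytic A s(Γ, Δ)
  | weaken (x y : Option (Ann X)) : Analytic A s(x, none) → Analytic A s(x, y)
  | contract (x : Option (Ann X)) : Analytic A s(x, x) → Analytic A s(x, none)
  | rule {p : Option (Ann X)} {qs : List (Option (Ann X))} {c : Option (Ann X)} :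
      ContextRule p qs → (∀ q ∈ qs, Analytic A s(q, c)) → Analytic A s(p, c)

/-- `Γ` is what is left of `u` after deleting one copy of `a`, or both copies when `Γ = none`;
deleting both at once is what lets the cut-elimination induction pass through contraction. -/
def Rest (a : Option (Ann X)) (u : OptSequent X) (Γ : Option (Ann X)) : Prop :=
  u = s(Γ, a) ∨ (Γ = none ∧ u = s(a, a))

theorem rest_mk_iff {a x y Γ : Option (Ann X)} :
    Rest a s(x, y) Γ ↔
      (x = Γ ∧ y = a) ∨ (x = a ∧ y = Γ) ∨ (x = a ∧ y = a ∧ Γ = none) := by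
  simp only [Rest, Sym2.eq_iff]
  tauto

theorem Rest.mem {a Γ : Option (Ann X)} {u : OptSequent X} (h : Rest a u Γ) : a ∈ u := by
  rcases h with rfl | ⟨-, rfl⟩ <;> simp

def CutAdmissible (A : Set (Sequent X)) (φ : Formula X) : Prop :=
  ∀ {Γ Δ : Option (Ann X)},
    Analytic A s(Γ, ra φ) → Analytic A s(la φ, Δ) → Analytic A s(Γ, Δ)

namespace Analytic

variable {A : Set (Sequent X)}

theorem swap {x y : Option (Ann X)} (h : Analytic A s(x, y)) : Analytic A s(y, x) := by
  rwa [Sym2.eq_swap]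

theorem of_rest {a Γ : Option (Ann X)} {u : OptSequent X} (hΓ : Rest a u Γ)
    (hu : Analytic A u) : Analytic A s(Γ, a) := by
  rcases hΓ with rfl | ⟨rfl, rfl⟩
  · exact hu
  · exact (hu.contract a).swap

/-- To replace the formula `z` of a derivation by `e`, it suffices to do so where `z` is
introduced: in an axiom, in a hypothesis `s(z.flip, z)`, and by a logical rule. -/
theorem replace {z : Ann X} {e : Option (Ann X)}
    (hax : IsAxiomFormula A z.fml → ∀ Γ, Analytic A s(Γ, some z) → Analytic A s(Γ, e))
    (hhyp : Analytic A s(some z.flip, e))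
    (hrule : ∀ {qs c}, ContextRule (some z) qs → (∀ q ∈ qs, Analytic A s(q, c)) →
      Analytic A s(c, e))
    {u : OptSequent X} (hu : Analytic A u) {Γ : Option (Ann X)} (hΓ : Rest (some z) u Γ) :
    Analytic A s(Γ, e) := by
  induction hu generalizing Γ with
  | @ax w hw =>
    obtain ⟨b, hb, hbz⟩ := Sym2.mem_map.1 hΓ.mem
    exact hax ⟨w, hw, b, hb, by cases hbz; rfl⟩ Γ (of_rest hΓ (.ax hw))
  | hyp φ =>
    rcases rest_mk_iff.1 hΓ with ⟨rfl, h⟩ | ⟨h, rfl⟩ | ⟨h, h', -⟩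
    · cases h; exact hhyp
    · cases h; exact hhyp
    · cases h; cases h'
  | cut hψ h₁ h₂ ih₁ ih₂ =>
    rcases rest_mk_iff.1 hΓ with ⟨rfl, rfl⟩ | ⟨rfl, rfl⟩ | ⟨rfl, rfl, rfl⟩
    · exact .cut hψ h₁ (ih₂ (.inl rfl))
    · exact (Analytic.cut hψ (ih₁ (.inl Sym2.eq_swap)).swap h₂).swap
    · have h := Analytic.cut hψ (ih₁ (.inl Sym2.eq_swap)).swap (ih₂ (.inl rfl))
      exact (h.contract e).swap
  | weaken _ _ h ih =>
    rcases rest_mk_iff.1 hΓ with ⟨rfl, rfl⟩ | ⟨rfl, rfl⟩ | ⟨rfl, rfl, rfl⟩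
    · exact .weaken _ e h
    · exact (Analytic.weaken e _ (ih (.inl Sym2.eq_swap)).swap).swap
    · exact ih (.inl Sym2.eq_swap)
  | contract _ _ ih =>
    rcases rest_mk_iff.1 hΓ with ⟨-, h'⟩ | ⟨rfl, rfl⟩ | ⟨-, h', -⟩
    · cases h'
    · exact ih (.inr ⟨rfl, rfl⟩)
    · cases h'
  | rule hr hprem ih =>
    rcases rest_mk_iff.1 hΓ with ⟨rfl, rfl⟩ | ⟨rfl, rfl⟩ | ⟨rfl, rfl, rfl⟩
    · exact .rule hr fun q hq => ih q hq (.inl rfl)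
    · exact hrule hr hprem
    · exact ((hrule hr fun q hq => ih q hq (.inl rfl)).contract e).swap

theorem cut_of_rules {φ : Formula X}
    (ih : ∀ ψ : Formula X, ψ.size < φ.size → CutAdmissible A ψ)
    {qs rs : List (Option (Ann X))} {Γ Δ : Option (Ann X)}
    (hl : ContextRule (ra φ) qs) (hl' : ∀ q ∈ qs, Analytic A s(q, Γ))
    (hr : ContextRule (la φ) rs) (hr' : ∀ r ∈ rs, Analytic A s(r, Δ)) :
    Analytic A s(Γ, Δ) := by
  cases hl with
  | andR α β =>
    cases hr with
    | andL₁ => exact ih α (by simp [Formula.size]) (hl' _ (by simp)).swap (hr' _ (by simp))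
    | andL₂ => exact ih β (by simp [Formula.size]) (hl' _ (by simp)).swap (hr' _ (by simp))
  | orR₁ α β =>
    cases hr with
    | orL => exact ih α (by simp [Formula.size]) (hl' _ (by simp)).swap (hr' _ (by simp))
  | orR₂ α β =>
    cases hr with
    | orL => exact ih β (by simp [Formula.size]) (hl' _ (by simp)).swap (hr' _ (by simp))
  | negR α =>
    cases hr with
    | negL => exact (ih α (by simp [Formula.size]) (hr' _ (by simp)).swap (hl' _ (by simp))).swap
  | topR => cases hr

theorem cut_of_rule_left {φ : Formula X}
    (ih : ∀ ψ : Formula X, ψ.size < φ.size → CutAdmissible A ψ)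
    {qs : List (Option (Ann X))} {Γ : Option (Ann X)}
    (hl : ContextRule (ra φ) qs) (hl' : ∀ q ∈ qs, Analytic A s(q, Γ))
    {v : OptSequent X} (hv : Analytic A v) {Δ : Option (Ann X)} (hΔ : Rest (la φ) v Δ) :
    Analytic A s(Δ, Γ) :=
  have hD₁ : Analytic A s(ra φ, Γ) := .rule hl hl'
  replace (fun hφ _ h => (Analytic.cut hφ hD₁.swap h.swap).swap) hD₁
    (fun hr hr' => (cut_of_rules ih hl hl' hr hr').swap) hv hΔ

theorem cutAdmissible (φ : Formula X) : CutAdmissible A φ := fun hD₁ hD₂ =>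
  replace (fun hφ _ h => h.cut hφ hD₂) hD₂
    (fun hl hl' =>
      (cut_of_rule_left (fun ψ _ => cutAdmissible ψ) hl hl' hD₂ (.inl Sym2.eq_swap)).swap)
    hD₁ (.inl rfl)
termination_by φ.size

end Analytic

theorem OLProof.toAnalytic {A : Set (Sequent X)} {t : Sequent X} (h : OLProof A t) :
    Analytic A (t.map some) := by
  induction h with
  | ax hw => exact .ax hw
  | hyp φ => exact .hyp φ
  | cut _ _ φ _ _ ih₁ ih₂ => exact Analytic.cutAdmissible φ ih₁ ih₂
  | replace _ _ _ ih => exact .weaken _ _ (.contract _ ih)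
  | andL₁ φ ψ _ _ ih => exact .rule (.andL₁ φ ψ) (by simpa using ih)
  | andL₂ φ ψ _ _ ih => exact .rule (.andL₂ φ ψ) (by simpa using ih)
  | andR _ φ ψ _ _ ih₁ ih₂ =>
    exact (Analytic.rule (.andR φ ψ) (by simpa using And.intro ih₁.swap ih₂.swap)).swap
  | orL φ ψ _ _ _ ih₁ ih₂ => exact .rule (.orL φ ψ) (by simpa using And.intro ih₁ ih₂)
  | orR₁ _ φ ψ _ ih => exact (Analytic.rule (.orR₁ φ ψ) (by simpa using ih.swap)).swap
  | orR₂ _ φ ψ _ ih => exact (Analytic.rule (.orR₂ φ ψ) (by simpa using ih.swap)).swap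
  | negL _ φ _ ih => exact (Analytic.rule (.negL φ) (by simpa using ih.swap)).swap
  | negR φ _ _ ih => exact .rule (.negR φ) (by simpa using ih)
  | botL _ => exact .rule .botL (by simp)
  | topR _ => exact (Analytic.rule .topR (by simp)).swap

theorem ContextRule.subformula {a a' : Ann X} {qs : List (Option (Ann X))}
    (hr : ContextRule (some a) qs) (hq : some a' ∈ qs) : Subformula a'.fml a.fml := by
  cases hr <;> simp only [List.mem_cons, List.not_mem_nil, Option.some.injEq, or_false] at hq <;>
    rcases hq with rfl | rfl <;>
    first
    | exact .and_left (.refl _) | exact .and_right (.refl _)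
    | exact .or_left (.refl _) | exact .or_right (.refl _) | exact .not_sub (.refl _)

theorem OLProofIn.of_contextRule {A S : Set (Sequent X)} {a b : Ann X}
    {qs : List (Option (Ann X))} (hr : ContextRule (some a) qs) (hab : s(a, b) ∈ S)
    (hprem : ∀ a', some a' ∈ qs → OLProofIn A S s(a', b)) : OLProofIn A S s(a, b) := by
  have hba : s(b, a) ∈ S := Sym2.eq_swap ▸ hab
  cases hr with
  | andL₁ φ ψ => exact .andL₁ φ ψ b hab (hprem _ (by simp))
  | andL₂ φ ψ => exact .andL₂ φ ψ b hab (hprem _ (by simp))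
  | andR φ ψ =>
    exact (OLProofIn.andR b φ ψ hba (hprem _ (by simp)).swap (hprem _ (by simp)).swap).swap
  | orL φ ψ => exact .orL φ ψ b hab (hprem _ (by simp)) (hprem _ (by simp))
  | orR₁ φ ψ => exact (OLProofIn.orR₁ b φ ψ hba (hprem _ (by simp)).swap).swap
  | orR₂ φ ψ => exact (OLProofIn.orR₂ b φ ψ hba (hprem _ (by simp)).swap).swap
  | negL φ => exact (OLProofIn.negL b φ hba (hprem _ (by simp)).swap).swap
  | negR φ => exact .negR φ b hab (hprem _ (by simp))
  | botL => exact .botL b hab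
  | topR => exact (OLProofIn.topR b hba).swap

def SubformulaClosed (F : Set (Ann X)) : Prop :=
  ∀ ⦃a⦄, a ∈ F → ∀ b : Ann X, Subformula b.fml a.fml → b ∈ F

def Fits (x : Option (Ann X)) (a : Ann X) : Prop :=
  x = none ∨ x = some a

@[simp]
theorem fits_some {b a : Ann X} : Fits (some b) a ↔ b = a := by
  simp [Fits]

def FillingsProvable (A : Set (Sequent X)) (F : Set (Ann X)) (u : OptSequent X) : Prop :=
  ∀ ⦃x y : Option (Ann X)⦄ ⦃a b : Ann X⦄,
    u = s(x, y) → Fits x a → Fits y b → a ∈ F → b ∈ F → OLProofIn A F.sym2 s(a, b)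

variable {A : Set (Sequent X)} {F : Set (Ann X)}

theorem fillingsProvable_mk {x y : Option (Ann X)}
    (h : ∀ a b, Fits x a → Fits y b → a ∈ F → b ∈ F → OLProofIn A F.sym2 s(a, b)) :
    FillingsProvable A F s(x, y) := by
  intro x' y' a b hu hx hy ha hb
  rcases Sym2.eq_iff.1 hu with ⟨rfl, rfl⟩ | ⟨rfl, rfl⟩
  · exact h a b hx hy ha hb
  · exact (h b a hy hx hb ha).swap

theorem IsAxiomFormula.mem (hF : SubformulaClosed F) (hA : ∀ w ∈ A, ∀ b ∈ w, b ∈ F)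
    {φ : Formula X} (hφ : IsAxiomFormula A φ) (c : Ann X) (hc : c.fml = φ) : c ∈ F := by
  obtain ⟨w, hw, b, hb, rfl⟩ := hφ
  exact hF (hA w hw b hb) c (hc ▸ .refl _)

theorem Analytic.fillingsProvable (hF : SubformulaClosed F) (hA : ∀ w ∈ A, ∀ b ∈ w, b ∈ F)
    {u : OptSequent X} (h : Analytic A u) : FillingsProvable A F u := by
  induction h with
  | @ax w hw =>
    induction w using Sym2.inductionOn with
    | hf c d =>
      refine fillingsProvable_mk fun a b hx hy ha hb => ?_
      rw [fits_some] at hx hy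
      subst hx hy
      exact .ax hw ⟨ha, hb⟩
  | hyp φ =>
    refine fillingsProvable_mk fun a b hx hy ha hb => ?_
    rw [fits_some] at hx hy
    subst hx hy
    exact .hyp φ ⟨ha, hb⟩
  | cut hφ _ _ ih₁ ih₂ =>
    refine fillingsProvable_mk fun a b hx hy ha hb => ?_
    exact .cut a b _ ⟨ha, hb⟩ (ih₁ rfl hx (.inr rfl) ha (hφ.mem hF hA _ rfl))
      (ih₂ rfl (.inr rfl) hy (hφ.mem hF hA _ rfl) hb)
  | weaken _ _ _ ih =>
    exact fillingsProvable_mk fun a b hx _ ha hb => ih rfl hx (.inl rfl) ha hb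
  | contract _ _ ih =>
    refine fillingsProvable_mk fun a b hx _ ha hb => ?_
    rcases hx with rfl | rfl
    · exact ih rfl (.inl rfl) (.inl rfl) ha hb
    · exact .replace a b ⟨ha, hb⟩ (ih rfl (.inr rfl) (.inr rfl) ha ha)
  | rule hr _ ih =>
    refine fillingsProvable_mk fun a b hx hy ha hb => ?_
    rcases hx with rfl | rfl
    · cases hr
    · exact .of_contextRule hr ⟨ha, hb⟩ fun a' hq =>
        ih _ hq rfl (.inr rfl) hy (hF ha a' (hr.subformula hq)) hb

theorem Analytic.toOLProofIn (hF : SubformulaClosed F) (hA : ∀ w ∈ A, ∀ b ∈ w, b ∈ F)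
    {t : Sequent X} (h : Analytic A (t.map some)) (ht : ∀ a ∈ t, a ∈ F) :
    OLProofIn A F.sym2 t := by
  induction t using Sym2.inductionOn with
  | hf a b =>
    exact h.fillingsProvable hF hA rfl (.inr rfl) (.inr rfl) (ht a (by simp)) (ht b (by simp))

end Analytic

theorem ol_subformula_property_general {X : Type}
    (A : Set (Sequent X)) (t : Sequent X) (h : OLProof A t) :
    OLProofIn A
      {u : Sequent X | ∀ a ∈ u, ∃ b : Ann X,
        (b ∈ t ∨ ∃ w ∈ A, b ∈ w) ∧ Subformula (Ann.fml a) (Ann.fml b)} t := by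
  let F : Set (Ann X) :=
    {a | ∃ b : Ann X, (b ∈ t ∨ ∃ w ∈ A, b ∈ w) ∧ Subformula a.fml b.fml}
  have hF : SubformulaClosed F := fun a ⟨b, hb, hab⟩ c hca => ⟨b, hb, hca.trans hab⟩
  have hA : ∀ w ∈ A, ∀ b ∈ w, b ∈ F := fun w hw b hb =>
    ⟨b, .inr ⟨w, hw, hb⟩, .refl _⟩
  have ht : ∀ a ∈ t, a ∈ F := fun a ha => ⟨a, .inl ha, .refl _⟩
  have hS : F.sym2 = {u : Sequent X | ∀ a ∈ u, a ∈ F} :=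
    Set.ext fun _ => Set.mem_sym2_iff_subset
  exact hS ▸ h.toAnalytic.toOLProofIn hF hA ht

/-- Subformula property: a sequent provable from axioms `A` has a
proof in which every formula occurring in any sequent of the proof is a
subformula of a formula of the conclusion or of a formula occurring in `A`. -/
theorem ol_subformula_property {X : Type} [Countable X] [Infinite X]
    (A : Set (Sequent X)) (t : Sequent X) (h : OLProof A t) :
    OLProofIn A
      {u : Sequent X | ∀ a ∈ u, ∃ b : Ann X,
        (b ∈ t ∨ ∃ w ∈ A, b ∈ w) ∧ Subformula (Ann.fml a) (Ann.fml b)} t :=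
  ol_subformula_property_general A t h
end
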